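/- Let A and B be nonempty compact metric spaces and let c : A × B → ℝ be continuous. Then there exist μ* ∈ P(A) and ν* ∈ P(B) forming a saddle point of the mixed extension of c: for every μ ∈ P(A) and every ν ∈ P(B), ∫_A ∫_B c(a,b) ν*(db) μ(da) ≤ ∫_A ∫_B c(a,b) ν*(db) μ*(da) ≤ ∫_A ∫_B c(a,b) ν(db) μ*(da). -/

import Mathlib

/-!
Send a probability measure `μ` to the family of its integrals `f ↦ ∫ f dμ` of bounded continuous
functions. This is a continuous map into the locally convex space `(A →ᵇ ℝ) → ℝ`, so its image is
compact (Prokhorov); it is convex because probability measures can be mixed. The mixed extension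
of `c` factors, in `μ`, through the evaluation at `a ↦ ∫ c(a, b) dν`, and, in `ν` (by Fubini),
through the evaluation at `b ↦ ∫ c(a, b) dμ`. Sion's minimax theorem on the two images then
yields the saddle point.
-/

open MeasureTheory Set Function
open scoped NNReal BoundedContinuousFunction

section Quasiconvex

variable {𝕜 E β : Type*} [Semiring 𝕜] [PartialOrder 𝕜] [AddCommMonoid E] {s : Set E}

lemma QuasiconvexOn.congr [SMul 𝕜 E] [LE β] {f g : E → β} (hf : QuasiconvexOn 𝕜 s f)
    (hfg : EqOn f g s) : QuasiconvexOn 𝕜 s g := fun r => by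
  convert hf r using 1
  ext x
  exact and_congr_right fun hx => by rw [hfg hx]

variable [Module 𝕜 E] [AddCommMonoid β] [PartialOrder β] [IsOrderedAddMonoid β] [Module 𝕜 β]
  [PosSMulMono 𝕜 β]

lemma LinearMap.quasiconvexOn (L : E →ₗ[𝕜] β) (hs : Convex 𝕜 s) : QuasiconvexOn 𝕜 s L :=
  hs.quasiconvexOn_of_convex_le fun r => convex_halfSpace_le L.isLinear r

lemma LinearMap.quasiconcaveOn (L : E →ₗ[𝕜] β) (hs : Convex 𝕜 s) : QuasiconcaveOn 𝕜 s L :=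
  hs.quasiconcaveOn_of_convex_ge fun r => convex_halfSpace_ge L.isLinear r

end Quasiconvex

theorem exists_saddle_of_factors_through_continuousLinear
    {P Q E F : Type*} [TopologicalSpace P] [CompactSpace P] [Nonempty P]
    [TopologicalSpace Q] [CompactSpace Q] [Nonempty Q]
    [TopologicalSpace E] [AddCommGroup E] [Module ℝ E] [IsTopologicalAddGroup E]
    [ContinuousSMul ℝ E]
    [TopologicalSpace F] [AddCommGroup F] [Module ℝ F] [IsTopologicalAddGroup F]
    [ContinuousSMul ℝ F]
    {Φ : P → E} {Ψ : Q → F} (hΦ : Continuous Φ) (hΨ : Continuous Ψ)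
    (hΦc : Convex ℝ (range Φ)) (hΨc : Convex ℝ (range Ψ))
    (p : P → Q → ℝ) (ℓ : Q → E →L[ℝ] ℝ) (hℓ : ∀ x y, p x y = ℓ y (Φ x))
    (m : P → F →L[ℝ] ℝ) (hm : ∀ x y, p x y = m x (Ψ y)) :
    ∃ x₀ y₀, ∀ x y, p x y₀ ≤ p x₀ y₀ ∧ p x₀ y₀ ≤ p x₀ y := by
  -- `invFun Ψ ψ` is an arbitrary preimage of `ψ`; by `hm`, `p x y` only depends on `Ψ y`.
  set f : F → E → ℝ := fun ψ φ => ℓ (invFun Ψ ψ) φ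
  have hf : ∀ x y, f (Ψ y) (Φ x) = p x y := fun x y => by
    simp only [f]
    rw [← hℓ, hm, invFun_eq (f := Ψ) ⟨y, rfl⟩, ← hm]
  have hfm : ∀ x, EqOn (m x) (fun ψ => f ψ (Φ x)) (range Ψ) := by
    rintro x _ ⟨y, rfl⟩
    exact ((hf x y).trans (hm x y)).symm
  obtain ⟨_, ⟨y₀, rfl⟩, _, ⟨x₀, rfl⟩, hsaddle⟩ := Sion.exists_isSaddlePointOn
    (range_nonempty Ψ) hΨc (isCompact_range hΨ)
    (by
      rintro _ ⟨x, rfl⟩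
      exact ((m x).continuous.continuousOn.congr (hfm x).symm).lowerSemicontinuousOn)
    (by
      rintro _ ⟨x, rfl⟩
      exact ((m x).toLinearMap.quasiconvexOn hΨc).congr (hfm x))
    hΦc (range_nonempty Φ) (isCompact_range hΦ)
    (fun ψ _ => (ℓ (invFun Ψ ψ)).continuous.continuousOn.upperSemicontinuousOn)
    (fun ψ _ => (ℓ (invFun Ψ ψ)).toLinearMap.quasiconcaveOn hΦc)
  have hp : ∀ x y, p x y₀ ≤ p x₀ y := fun x y => by
    simpa only [← hf] using hsaddle (Ψ y) ⟨y, rfl⟩ (Φ x) ⟨x, rfl⟩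
  exact ⟨x₀, y₀, fun x y => ⟨hp x y₀, hp x₀ y⟩⟩

namespace MeasureTheory.ProbabilityMeasure

variable {Ω : Type*} [MeasurableSpace Ω]

noncomputable def mix (a b : ℝ≥0) (hab : a + b = 1) (μ ν : ProbabilityMeasure Ω) :
    ProbabilityMeasure Ω :=
  ⟨a • (μ : Measure Ω) + b • (ν : Measure Ω), ⟨by simp [← ENNReal.coe_add, hab]⟩⟩

lemma integral_mix (a b : ℝ≥0) (hab : a + b = 1) (μ ν : ProbabilityMeasure Ω) {f : Ω → ℝ}
    (hμ : Integrable f μ) (hν : Integrable f ν) :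
    ∫ x, f x ∂(mix a b hab μ ν) = a * ∫ x, f x ∂μ + b * ∫ x, f x ∂ν := by
  rw [mix, coe_mk, integral_add_measure hμ.smul_measure_nnreal hν.smul_measure_nnreal,
    integral_smul_nnreal_measure, integral_smul_nnreal_measure, NNReal.smul_def, NNReal.smul_def,
    smul_eq_mul, smul_eq_mul]

variable [TopologicalSpace Ω] [OpensMeasurableSpace Ω]

noncomputable def integralFunctional (μ : ProbabilityMeasure Ω) : (Ω →ᵇ ℝ) → ℝ :=
  fun f => ∫ x, f x ∂μ

lemma continuous_integralFunctional :
    Continuous (integralFunctional : ProbabilityMeasure Ω → (Ω →ᵇ ℝ) → ℝ) :=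
  _root_.continuous_pi fun f => continuous_integral_boundedContinuousFunction f

lemma integralFunctional_mix (a b : ℝ≥0) (hab : a + b = 1) (μ ν : ProbabilityMeasure Ω) :
    (mix a b hab μ ν).integralFunctional =
      (a : ℝ) • μ.integralFunctional + (b : ℝ) • ν.integralFunctional := by
  ext f
  exact integral_mix a b hab μ ν (f.integrable _) (f.integrable _)

lemma convex_range_integralFunctional :
    Convex ℝ (range (integralFunctional : ProbabilityMeasure Ω → (Ω →ᵇ ℝ) → ℝ)) := by
  rintro _ ⟨μ, rfl⟩ _ ⟨ν, rfl⟩ a b ha hb hab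
  exact ⟨mix ⟨a, ha⟩ ⟨b, hb⟩ (NNReal.eq hab) μ ν, integralFunctional_mix ..⟩

end MeasureTheory.ProbabilityMeasure

noncomputable def BoundedContinuousFunction.integralSnd {A B : Type*} [PseudoMetricSpace A]
    [CompactSpace A] [TopologicalSpace B] [CompactSpace B] [MeasurableSpace B]
    [OpensMeasurableSpace B] (c : A × B → ℝ) (hc : Continuous c) (ν : Measure B)
    [IsFiniteMeasure ν] : A →ᵇ ℝ :=
  .mkOfCompact ⟨fun a => ∫ b, c (a, b) ∂ν, by
    simpa using continuous_parametric_integral_of_continuous (μ := ν) (f := fun a b => c (a, b))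
      hc isCompact_univ⟩

/-- Existence of a saddle point of the mixed extension of a continuous payoff on
compact metric spaces. -/
theorem mixed_extension_saddle_point
    {A B : Type*}
    [MetricSpace A] [CompactSpace A] [Nonempty A] [MeasurableSpace A] [BorelSpace A]
    [MetricSpace B] [CompactSpace B] [Nonempty B] [MeasurableSpace B] [BorelSpace B]
    (c : A × B → ℝ) (hc : Continuous c) :
    ∃ (μstar : ProbabilityMeasure A) (νstar : ProbabilityMeasure B),
      ∀ (μ : ProbabilityMeasure A) (ν : ProbabilityMeasure B),
        (∫ a, ∫ b, c (a, b) ∂(νstar : Measure B) ∂(μ : Measure A)) ≤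
            (∫ a, ∫ b, c (a, b) ∂(νstar : Measure B) ∂(μstar : Measure A)) ∧
          (∫ a, ∫ b, c (a, b) ∂(νstar : Measure B) ∂(μstar : Measure A)) ≤
            (∫ a, ∫ b, c (a, b) ∂(ν : Measure B) ∂(μstar : Measure A)) := by
  inhabit A
  inhabit B
  exact exists_saddle_of_factors_through_continuousLinear
    ProbabilityMeasure.continuous_integralFunctional
    ProbabilityMeasure.continuous_integralFunctional
    ProbabilityMeasure.convex_range_integralFunctional
    ProbabilityMeasure.convex_range_integralFunctional
    (fun μ ν => ∫ a, ∫ b, c (a, b) ∂(ν : Measure B) ∂(μ : Measure A))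
    (fun ν => .proj (BoundedContinuousFunction.integralSnd c hc ν)) (fun _ _ => rfl)
    (fun μ => .proj (BoundedContinuousFunction.integralSnd (c ∘ Prod.swap)
      (hc.comp continuous_swap) μ))
    (fun _ _ => integral_integral_swap_of_hasCompactSupport (f := fun a b => c (a, b)) hc
      (HasCompactSupport.of_compactSpace _))
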